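/- Every asynchronous dual closed subtyping relation is an (orphan-message-free) asynchronous subtyping relation; hence T ≤_DC S implies T ≤ S. -/

import Mathlib

/-- Binary session types: output selection `⊕{lᵢ:Tᵢ}`, input branching `&{lᵢ:Tᵢ}`,
recursion `μt.T` (de Bruijn), variables, and `end`. Labels are natural numbers. -/
inductive SType : Type
  | out : List (Nat × SType) → SType
  | inp : List (Nat × SType) → SType
  | mu  : SType → SType
  | var : Nat → SType
  | done : SType

mutual
/-- The dual of a session type: swap `⊕` and `&`. -/
def SType.dual : SType → SType
  | .out bs => .inp (dualBranches bs)
  | .inp bs => .out (dualBranches bs)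
  | .mu t => .mu t.dual
  | .var n => .var n
  | .done => .done
def dualBranches : List (Nat × SType) → List (Nat × SType)
  | [] => []
  | (l, t) :: rest => (l, t.dual) :: dualBranches rest
end

mutual
/-- Substitution of `s` for the variable of de Bruijn index `k`. -/
def SType.subst (s : SType) : Nat → SType → SType
  | k, .out bs => .out (substBranches s k bs)
  | k, .inp bs => .inp (substBranches s k bs)
  | k, .mu t => .mu (SType.subst s (k+1) t)
  | k, .var n => if n = k then s else .var n
  | _, .done => .done
def substBranches (s : SType) : Nat → List (Nat × SType) → List (Nat × SType)
  | _, [] => []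
  | k, (l, t) :: rest => (l, SType.subst s k t) :: substBranches s k rest
end

mutual
/-- One-step unfolding of a session type. -/
def SType.unfold1 : SType → SType
  | .out bs => .out (unfold1Branches bs)
  | .inp bs => .inp (unfold1Branches bs)
  | .mu t => SType.subst (.mu t) 0 t
  | .var n => .var n
  | .done => .done
def unfold1Branches : List (Nat × SType) → List (Nat × SType)
  | [] => []
  | (l, t) :: rest => (l, t.unfold1) :: unfold1Branches rest
end

/-- `n`-fold unfolding. -/
def SType.unfoldN : Nat → SType → SType
  | 0, t => t
  | n+1, t => (SType.unfoldN n t).unfold1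

/-- A session type is single-out if every output selection has exactly one choice. -/
inductive SingleOut : SType → Prop
  | out {l t} : SingleOut t → SingleOut (.out [(l, t)])
  | inp {bs} : (∀ p ∈ bs, SingleOut p.2) → SingleOut (.inp bs)
  | mu {t} : SingleOut t → SingleOut (.mu t)
  | var {n} : SingleOut (.var n)
  | done : SingleOut .done

/-- A session type is single-in if every input branching has exactly one choice. -/
inductive SingleIn : SType → Prop
  | out {bs} : (∀ p ∈ bs, SingleIn p.2) → SingleIn (.out bs)
  | inp {l t} : SingleIn t → SingleIn (.inp [(l, t)])
  | mu {t} : SingleIn t → SingleIn (.mu t)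
  | var {n} : SingleIn (.var n)
  | done : SingleIn .done
/-- `T` contains at least one input branching. -/
inductive HasInp : SType → Prop
  | inp {bs} : HasInp (.inp bs)
  | out {bs l t} : (l, t) ∈ bs → HasInp t → HasInp (.out bs)
  | mu {t} : HasInp t → HasInp (.mu t)

/-- Input contexts: multi-hole contexts made of input branchings, holes are numbered. -/
inductive ICtx : Type
  | hole : Nat → ICtx
  | inp : List (Nat × ICtx) → ICtx

mutual
/-- Fill each hole `n` of the input context with `f n`. -/
def ICtx.fill : ICtx → (Nat → SType) → SType
  | .hole n, f => f n
  | .inp bs, f => .inp (fillBranches bs f)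
def fillBranches : List (Nat × ICtx) → (Nat → SType) → List (Nat × SType)
  | [], _ => []
  | (l, A) :: rest, f => (l, A.fill f) :: fillBranches rest f
end

mutual
/-- The list of hole indices occurring in an input context. -/
def ICtx.holes : ICtx → List Nat
  | .hole n => [n]
  | .inp bs => holesBranches bs
def holesBranches : List (Nat × ICtx) → List Nat
  | [] => []
  | (_, A) :: rest => A.holes ++ holesBranches rest
end

/-- Well-formed input context: holes are exactly `1..m` for some `m ≥ 1`,
each occurring exactly once. -/
def ICtx.WF (A : ICtx) : Prop :=
  ∃ m : Nat, 1 ≤ m ∧ A.holes.Perm (List.range' 1 m)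

/-- Labels of a branch list. -/
def labelsOf (bs : List (Nat × SType)) : List Nat := bs.map Prod.fst

def SubsetL (I J : List Nat) : Prop := ∀ l ∈ I, l ∈ J
def EqL (I J : List Nat) : Prop := ∀ l, l ∈ I ↔ l ∈ J

/-- `R` is an asynchronous subtyping relation, with flags:
`orphan`: include the no-orphan-message constraint in condition 2;
`outTotal`: require `I = J_k` in condition 2 (no output covariance);
`inTotal`: require `J = I` in condition 3 (no input contravariance). -/
def IsSubRel (orphan outTotal inTotal : Bool) (R : SType → SType → Prop) : Prop :=
  ∀ T S, R T S →
    -- 1. end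
    (T = .done → ∃ n, S.unfoldN n = .done) ∧
    -- 2. output selection
    (∀ bs, T = .out bs →
      ∃ (n : Nat) (A : ICtx) (Sb : Nat → List (Nat × SType)),
        A.WF ∧
        S.unfoldN n = A.fill (fun k => .out (Sb k)) ∧
        (∀ k ∈ A.holes,
          (outTotal = true → EqL (labelsOf bs) (labelsOf (Sb k))) ∧
          (outTotal = false → SubsetL (labelsOf bs) (labelsOf (Sb k)))) ∧
        (∀ l Ti, (l, Ti) ∈ bs → ∃ g : Nat → SType,
          (∀ k ∈ A.holes, (Sb k).lookup l = some (g k)) ∧ R Ti (A.fill g)) ∧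
        (orphan = true → A ≠ .hole 1 → ∀ l Ti, (l, Ti) ∈ bs → HasInp Ti)) ∧
    -- 3. input branching
    (∀ bs, T = .inp bs →
      ∃ (n : Nat) (Sb : List (Nat × SType)),
        S.unfoldN n = .inp Sb ∧
        (inTotal = true → EqL (labelsOf Sb) (labelsOf bs)) ∧
        (inTotal = false → SubsetL (labelsOf Sb) (labelsOf bs)) ∧
        (∀ l Sj, (l, Sj) ∈ Sb → ∃ Tj, bs.lookup l = some Tj ∧ R Tj Sj)) ∧
    -- 4. recursion
    (∀ T', T = .mu T' → R (SType.subst T 0 T') S)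

/-- An (orphan-message-free) asynchronous subtyping relation. -/
def IsAsyncSubRel (R : SType → SType → Prop) : Prop := IsSubRel true false false R

/-- Asynchronous subtyping `T ≤ S`. -/
def Subt (T S : SType) : Prop := ∃ R, IsAsyncSubRel R ∧ R T S

/-- `R` is dual closed: `(T,S) ∈ R` implies `(dual S, dual T) ∈ R`. -/
def DualClosed (R : SType → SType → Prop) : Prop :=
  ∀ T S, R T S → R S.dual T.dual

/-- An asynchronous dual closed subtyping relation: dual closed, and conditions
1, 3, 4 plus condition 2 without the no-orphan-message constraint. -/
def IsDCSubRel (R : SType → SType → Prop) : Prop :=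
  DualClosed R ∧ IsSubRel false false false R

/-- Asynchronous dual closed subtyping `T ≤_DC S`. -/
def SubtDC (T S : SType) : Prop := ∃ R, IsDCSubRel R ∧ R T S

/-!
If the output `T = ⊕{lᵢ : Tᵢ}` is matched in `S` under a proper input context `A`, then each
`Tᵢ` is related to a type starting with an input branching. Dual closure relates the dual of
that type, an output selection, to `dual Tᵢ`; condition 2 then unfolds `dual Tᵢ` into an input
context filled with outputs, whose dual contains an input branching. Since containing an input
branching is reflected by unfolding, `Tᵢ` itself contains one.
-/

mutual
theorem SType.dual_dual : (t : SType) → t.dual.dual = t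
  | .out bs => by simp [SType.dual, dualBranches_dualBranches bs]
  | .inp bs => by simp [SType.dual, dualBranches_dualBranches bs]
  | .mu t => by simp [SType.dual, SType.dual_dual t]
  | .var _ => rfl
  | .done => rfl
theorem dualBranches_dualBranches : (bs : List (Nat × SType)) →
    dualBranches (dualBranches bs) = bs
  | [] => rfl
  | (l, t) :: rest => by simp [dualBranches, SType.dual_dual t, dualBranches_dualBranches rest]
end

mutual
theorem SType.dual_subst (s : SType) : (k : Nat) → (t : SType) →
    (SType.subst s k t).dual = SType.subst s.dual k t.dual
  | k, .out bs => by simp [SType.subst, SType.dual, dualBranches_substBranches s k bs]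
  | k, .inp bs => by simp [SType.subst, SType.dual, dualBranches_substBranches s k bs]
  | k, .mu t => by simp [SType.subst, SType.dual, SType.dual_subst s (k+1) t]
  | k, .var n => by by_cases h : n = k <;> simp [SType.subst, SType.dual, h]
  | _, .done => rfl
theorem dualBranches_substBranches (s : SType) : (k : Nat) → (bs : List (Nat × SType)) →
    dualBranches (substBranches s k bs) = substBranches s.dual k (dualBranches bs)
  | _, [] => rfl
  | k, (l, t) :: rest => by
      simp [substBranches, dualBranches, SType.dual_subst s k t,
        dualBranches_substBranches s k rest]
end

mutual
theorem SType.dual_unfold1 : (t : SType) → t.unfold1.dual = t.dual.unfold1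
  | .out bs => by simp [SType.unfold1, SType.dual, dualBranches_unfold1Branches bs]
  | .inp bs => by simp [SType.unfold1, SType.dual, dualBranches_unfold1Branches bs]
  | .mu t => by simp [SType.unfold1, SType.dual, SType.dual_subst (.mu t) 0 t]
  | .var _ => rfl
  | .done => rfl
theorem dualBranches_unfold1Branches : (bs : List (Nat × SType)) →
    dualBranches (unfold1Branches bs) = unfold1Branches (dualBranches bs)
  | [] => rfl
  | (l, t) :: rest => by
      simp [unfold1Branches, dualBranches, SType.dual_unfold1 t,
        dualBranches_unfold1Branches rest]
end

theorem SType.dual_unfoldN : (n : Nat) → (t : SType) → (t.unfoldN n).dual = t.dual.unfoldN n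
  | 0, _ => rfl
  | n+1, t => by simp [SType.unfoldN, SType.dual_unfold1, SType.dual_unfoldN n t]

mutual
theorem HasInp.of_subst (s : SType) : (k : Nat) → (t : SType) →
    HasInp (SType.subst s k t) → HasInp t ∨ HasInp s
  | k, .out bs, h => by
      rw [SType.subst] at h
      cases h with
      | out hmem hu =>
        exact (HasInp.of_substBranches s k bs _ _ hmem hu).imp_left
          fun ⟨_, ht, hi⟩ => .out ht hi
  | _, .inp _, _ => .inl .inp
  | k, .mu t, h => by
      rw [SType.subst] at h
      cases h with
      | mu h => exact (HasInp.of_subst s (k+1) t h).imp_left .mu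
  | k, .var n, h => by
      rw [SType.subst] at h
      split_ifs at h with hnk
      · exact .inr h
      · cases h
  | _, .done, h => by cases h
theorem HasInp.of_substBranches (s : SType) : (k : Nat) → (bs : List (Nat × SType)) →
    (l : Nat) → (u : SType) → (l, u) ∈ substBranches s k bs → HasInp u →
    (∃ t, (l, t) ∈ bs ∧ HasInp t) ∨ HasInp s
  | _, [], _, _, h, _ => by cases h
  | k, (l', t) :: rest, l, u, h, hu => by
      rw [substBranches, List.mem_cons, Prod.mk.injEq] at h
      rcases h with ⟨rfl, rfl⟩ | h
      · exact (HasInp.of_subst s k t hu).imp_left fun ht => ⟨t, List.mem_cons_self, ht⟩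
      · exact (HasInp.of_substBranches s k rest l u h hu).imp_left
          fun ⟨t', ht', hi⟩ => ⟨t', List.mem_cons_of_mem _ ht', hi⟩
end

mutual
theorem HasInp.of_unfold1 : (t : SType) → HasInp t.unfold1 → HasInp t
  | .out bs, h => by
      rw [SType.unfold1] at h
      cases h with
      | out hmem hu =>
        obtain ⟨_, ht, hi⟩ := HasInp.of_unfold1Branches bs _ _ hmem hu
        exact .out ht hi
  | .inp _, _ => .inp
  | .mu t, h => (HasInp.of_subst (.mu t) 0 t h).elim .mu id
  | .var _, h => by cases h
  | .done, h => by cases h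
theorem HasInp.of_unfold1Branches : (bs : List (Nat × SType)) →
    (l : Nat) → (u : SType) → (l, u) ∈ unfold1Branches bs → HasInp u →
    ∃ t, (l, t) ∈ bs ∧ HasInp t
  | [], _, _, h, _ => by cases h
  | (l', t) :: rest, l, u, h, hu => by
      rw [unfold1Branches, List.mem_cons, Prod.mk.injEq] at h
      rcases h with ⟨rfl, rfl⟩ | h
      · exact ⟨t, List.mem_cons_self, HasInp.of_unfold1 t hu⟩
      · obtain ⟨t', ht', hi⟩ := HasInp.of_unfold1Branches rest l u h hu
        exact ⟨t', List.mem_cons_of_mem _ ht', hi⟩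
end

theorem HasInp.of_unfoldN : (n : Nat) → (t : SType) → HasInp (t.unfoldN n) → HasInp t
  | 0, _, h => h
  | n+1, t, h => HasInp.of_unfoldN n t (HasInp.of_unfold1 _ h)

theorem ICtx.WF.holes_ne_nil {A : ICtx} (hA : A.WF) : A.holes ≠ [] := by
  obtain ⟨m, hm, hperm⟩ := hA
  intro h
  have := hperm.length_eq
  rw [h, List.length_range', List.length_nil] at this
  omega

theorem ICtx.WF.exists_eq_inp {A : ICtx} (hA : A.WF) (hne : A ≠ .hole 1) :
    ∃ bs, A = .inp bs := by
  obtain ⟨m, hm, hperm⟩ := hA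
  cases A with
  | inp bs => exact ⟨bs, rfl⟩
  | hole k =>
    have h1 : 1 ∈ [k] := hperm.mem_iff.mpr (List.mem_range'_1.mpr ⟨le_rfl, by omega⟩)
    exact absurd (by simpa [eq_comm] using h1) hne

mutual
theorem ICtx.hasInp_dual_fill_out (Sb : Nat → List (Nat × SType)) : (A : ICtx) →
    A.holes ≠ [] → HasInp (A.fill fun k => .out (Sb k)).dual
  | .hole _, _ => .inp
  | .inp bs, h => by
      obtain ⟨_, _, hmem, hu⟩ := hasInp_dualBranches_fillBranches_out Sb bs h
      exact .out hmem hu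
theorem hasInp_dualBranches_fillBranches_out (Sb : Nat → List (Nat × SType)) :
    (bs : List (Nat × ICtx)) → holesBranches bs ≠ [] →
    ∃ l u, (l, u) ∈ dualBranches (fillBranches bs fun k => .out (Sb k)) ∧ HasInp u
  | [], h => absurd rfl h
  | (l, A) :: rest, h => by
      by_cases hA : A.holes = []
      · have hrest : holesBranches rest ≠ [] := by simpa [holesBranches, hA] using h
        obtain ⟨l', u, hmem, hu⟩ := hasInp_dualBranches_fillBranches_out Sb rest hrest
        exact ⟨l', u, List.mem_cons_of_mem _ hmem, hu⟩
      · exact ⟨l, _, List.mem_cons_self, ICtx.hasInp_dual_fill_out Sb A hA⟩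
end

theorem hasInp_of_rel_inp {R : SType → SType → Prop} {orphan outTotal inTotal : Bool}
    (hdc : DualClosed R) (hsub : IsSubRel orphan outTotal inTotal R) {T : SType}
    {bs : List (Nat × SType)} (h : R T (.inp bs)) : HasInp T := by
  obtain ⟨n, A, Sb, hWF, hunf, -⟩ := (hsub _ _ (hdc _ _ h)).2.1 _ rfl
  have hinp := ICtx.hasInp_dual_fill_out Sb A hWF.holes_ne_nil
  rw [← hunf, SType.dual_unfoldN, SType.dual_dual] at hinp
  exact HasInp.of_unfoldN n T hinp

theorem IsDCSubRel.isAsyncSubRel {R : SType → SType → Prop} (hR : IsDCSubRel R) :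
    IsAsyncSubRel R := by
  obtain ⟨hdc, hsub⟩ := hR
  intro T S hTS
  obtain ⟨h1, h2, h3, h4⟩ := hsub T S hTS
  refine ⟨h1, fun bs hT => ?_, h3, h4⟩
  obtain ⟨n, A, Sb, hWF, hunf, hlab, hcont, -⟩ := h2 bs hT
  refine ⟨n, A, Sb, hWF, hunf, hlab, hcont, fun _ hA l Ti hmem => ?_⟩
  obtain ⟨bsA, rfl⟩ := hWF.exists_eq_inp hA
  obtain ⟨g, -, hRg⟩ := hcont l Ti hmem
  exact hasInp_of_rel_inp hdc hsub hRg

/-- every asynchronous dual closed subtyping relation is an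
(orphan-message-free) asynchronous subtyping relation; hence `T ≤_DC S`
implies `T ≤ S`. -/
theorem dc_implies_async :
    (∀ R : SType → SType → Prop, IsDCSubRel R → IsAsyncSubRel R) ∧
    (∀ T S : SType, SubtDC T S → Subt T S) :=
  ⟨fun _ hR => hR.isAsyncSubRel, fun _ _ ⟨R, hR, hTS⟩ => ⟨R, hR.isAsyncSubRel, hTS⟩⟩
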